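/- Under the CEO demand model with γ ∈ (0,1), if 0 < η < 1/(1 + ρ(γ^ε − 1)), then for every h > 0 all roots of P(z) = (h+1)(z−1) + 2η(1 + ρhγ^ε + h − ρh) lie strictly inside the unit disk. -/

import Mathlib

/-! The polynomial is linear with real coefficients, so its only root is the real number
`z = 1 - b / a` with `a = h + 1` and `b = 2η(1 + h c)`, where `c = 1 + ρ(γ^ε - 1) ≥ 1` because
`γ^ε > 1`. It lies in `(-1, 1)` exactly when `0 < b < 2a`, i.e. `η (1 + h c) < 1 + h`; this
follows from `η c < 1` together with `η < 1 / c ≤ 1`. -/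

theorem Complex.norm_lt_one_of_mul_sub_one_add_eq_zero {a b : ℝ} (hb : 0 < b) (hba : b < 2 * a)
    {z : ℂ} (hz : (a : ℂ) * (z - 1) + b = 0) : ‖z‖ < 1 := by
  have ha : (a : ℂ) ≠ 0 := Complex.ofReal_ne_zero.mpr (by linarith)
  have hz_real : z = ((1 - b / a : ℝ) : ℂ) := by
    apply mul_left_cancel₀ ha
    push_cast
    field_simp
    linear_combination hz
  have hba' : 0 < b / a ∧ b / a < 2 := by
    have ha' : 0 < a := by linarith
    exact ⟨by positivity, (div_lt_iff₀ ha').mpr (by linarith)⟩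
  rw [hz_real, Complex.norm_real, Real.norm_eq_abs, abs_lt]
  constructor <;> linarith

theorem mul_one_add_mul_lt_one_add {c η h : ℝ} (hc : 1 ≤ c) (hη : η < 1 / c) (hh : 0 < h) :
    η * (1 + h * c) < 1 + h := by
  have hc₀ : 0 < c := by linarith
  have hηc : η * c < 1 := (lt_div_iff₀ hc₀).mp hη
  have hη₁ : η < 1 := hη.trans_le ((div_le_one hc₀).mpr hc)
  nlinarith

theorem stmt8_general (ρ ε γ η : ℝ) (hρ1 : 0 < ρ)
    (hε2 : ε < 0) (hγ1 : 0 < γ) (hγ2 : γ < 1)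
    (hη1 : 0 < η) (hη2 : η < 1 / (1 + ρ * (γ ^ ε - 1))) :
    ∀ h : ℝ, 0 < h →
      ∀ z : ℂ, ((h + 1 : ℝ) : ℂ) * (z - 1) +
        ((2 * η * (1 + ρ * h * γ ^ ε + h - ρ * h) : ℝ) : ℂ) = 0 →
        ‖z‖ < 1 := by
  intro h hh z hz
  have hγε : 1 < γ ^ ε := Real.one_lt_rpow_of_pos_of_lt_one_of_neg hγ1 hγ2 hε2
  have hc : 1 ≤ 1 + ρ * (γ ^ ε - 1) := by nlinarith
  have hcoeff : 1 + ρ * h * γ ^ ε + h - ρ * h = 1 + h * (1 + ρ * (γ ^ ε - 1)) := by ring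
  have hcoeff_pos : 0 < 1 + h * (1 + ρ * (γ ^ ε - 1)) := by nlinarith
  refine Complex.norm_lt_one_of_mul_sub_one_add_eq_zero ?_ ?_ hz
  · rw [hcoeff]; positivity
  · rw [hcoeff, mul_assoc]
    linarith [mul_one_add_mul_lt_one_add hc hη2 hh]

/-- Scaling attack under CEO demand with γ ∈ (0,1): if
0 < η < 1/(1+ρ(γ^ε-1)) then for every h > 0 all roots of
P(z)=(h+1)(z-1)+2η(1+ρhγ^ε+h-ρh) lie strictly inside the unit disk. -/
theorem stmt8 (ρ ε γ η : ℝ) (hρ1 : 0 < ρ) (hρ2 : ρ ≤ 1)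
    (hε1 : -1 < ε) (hε2 : ε < 0) (hγ1 : 0 < γ) (hγ2 : γ < 1)
    (hη1 : 0 < η) (hη2 : η < 1 / (1 + ρ * (γ ^ ε - 1))) :
    ∀ h : ℝ, 0 < h →
      ∀ z : ℂ, ((h + 1 : ℝ) : ℂ) * (z - 1) +
        ((2 * η * (1 + ρ * h * γ ^ ε + h - ρ * h) : ℝ) : ℂ) = 0 →
        ‖z‖ < 1 :=
  stmt8_general ρ ε γ η hρ1 hε2 hγ1 hγ2 hη1 hη2
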